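/- arXiv:1102.5585 — 2 statements merged into one kernel-verified Lean document; each statement's English description precedes it below -/
import Mathlib

section
/- A two-level PT-net system N with T = L ∪ H has the property SBNDC if and only if P(h,l) holds for every high-level transition h ∈ H and every low-level transition l ∈ L. -/
/-! ## Labelled transition systems -/

structure LTS (Q : Type _) (A : Type _) where
  init : Q
  tr : Q → A → Q → Prop

namespace LTS

variable {Q Q' A : Type _}

/-- One unobservable step. -/
def TauStep (S : LTS Q A) (Obs : Set A) (q q' : Q) : Prop :=
  ∃ τ, τ ∉ Obs ∧ S.tr q τ q'

/-- `q →* q'` : reflexive-transitive closure of unobservable steps. -/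
def TauStar (S : LTS Q A) (Obs : Set A) : Q → Q → Prop :=
  Relation.ReflTransGen (S.TauStep Obs)

/-- Weak steps producing a word of observable labels. -/
inductive WeakSteps (S : LTS Q A) (Obs : Set A) : Q → List A → Q → Prop
  | nil (q : Q) : WeakSteps S Obs q [] q
  | tau {q q' q'' : Q} {w : List A} {τ : A} :
      τ ∉ Obs → S.tr q τ q' → WeakSteps S Obs q' w q'' → WeakSteps S Obs q w q''
  | obs {q q' q'' : Q} {w : List A} {σ : A} :
      σ ∈ Obs → S.tr q σ q' → WeakSteps S Obs q' w q'' → WeakSteps S Obs q (σ :: w) q''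

/-- The language of a partially observed LTS. -/
def lang (S : LTS Q A) (Obs : Set A) : Set (List A) :=
  { w | ∃ q, S.WeakSteps Obs S.init w q }

end LTS

/-- `R` is a weak simulation of `S` by `S'`. -/
def IsWeakSimulation {Q Q' A : Type _} (Obs : Set A) (S : LTS Q A) (S' : LTS Q' A)
    (R : Q → Q' → Prop) : Prop :=
  R S.init S'.init ∧
  ∀ q1 q1', R q1 q1' →
    (∀ σ ∈ Obs, ∀ q2, S.tr q1 σ q2 →
      ∃ q1'' q2'' q2', S'.TauStar Obs q1' q1'' ∧ S'.tr q1'' σ q2'' ∧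
        S'.TauStar Obs q2'' q2' ∧ R q2 q2') ∧
    (∀ τ ∉ Obs, ∀ q2, S.tr q1 τ q2 →
      ∃ q2', S'.TauStar Obs q1' q2' ∧ R q2 q2')

/-- `S` is weakly simulated by `S'`. -/
def WeaklySimulated {Q Q' A : Type _} (Obs : Set A) (S : LTS Q A) (S' : LTS Q' A) : Prop :=
  ∃ R, IsWeakSimulation Obs S S' R

/-- `R` is a weak bisimulation between `S` and `S'`. -/
def IsWeakBisimulation {Q Q' A : Type _} (Obs : Set A) (S : LTS Q A) (S' : LTS Q' A)
    (R : Q → Q' → Prop) : Prop :=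
  IsWeakSimulation Obs S S' R ∧ IsWeakSimulation Obs S' S (fun q' q => R q q')

/-- `S` and `S'` are weakly bisimilar. -/
def WeaklyBisimilar {Q Q' A : Type _} (Obs : Set A) (S : LTS Q A) (S' : LTS Q' A) : Prop :=
  ∃ R, IsWeakBisimulation Obs S S' R

/-! ## Place/Transition Petri nets -/

/-- A PT-net over a universe `P` of places and `Tr` of transitions:
a finite set of places, a finite set of transitions, and input/output flows.
Flows of non-transitions vanish. -/
structure PTNet (P : Type _) (Tr : Type _) where
  places : Finset P
  transitions : Finset Tr
  pre : Tr → P → ℕ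
  post : Tr → P → ℕ
  pre_eq_zero : ∀ t ∉ transitions, ∀ p, pre t p = 0
  post_eq_zero : ∀ t ∉ transitions, ∀ p, post t p = 0

namespace PTNet

variable {P Tr : Type _} [DecidableEq P] [DecidableEq Tr]

/-- `M[t⟩` : transition `t` is enabled at marking `M`. -/
def Enabled (N : PTNet P Tr) (M : P → ℕ) (t : Tr) : Prop :=
  t ∈ N.transitions ∧ ∀ p ∈ N.places, N.pre t p ≤ M p

/-- The marking obtained by firing `t` at `M`. -/
def fire (N : PTNet P Tr) (M : P → ℕ) (t : Tr) : P → ℕ :=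
  fun p => if p ∈ N.places then M p + N.post t p - N.pre t p else M p

/-- `M[t⟩M'`. -/
def Fires (N : PTNet P Tr) (M : P → ℕ) (t : Tr) (M' : P → ℕ) : Prop :=
  N.Enabled M t ∧ M' = N.fire M t

/-- `M[s⟩M'` for a sequence `s` of transitions. -/
def FiresSeq (N : PTNet P Tr) : (P → ℕ) → List Tr → (P → ℕ) → Prop
  | M, [], M' => M' = M
  | M, t :: s, M' => ∃ M'', N.Fires M t M'' ∧ N.FiresSeq M'' s M'

/-- `M'` is reachable from `M`. -/
def Reachable (N : PTNet P Tr) (M M' : P → ℕ) : Prop :=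
  ∃ s, N.FiresSeq M s M'

/-- The restriction `N \ T'` of a net: the transitions in `T'` are removed. -/
def restrict (N : PTNet P Tr) (T' : Finset Tr) : PTNet P Tr where
  places := N.places
  transitions := N.transitions \ T'
  pre := fun t p => if t ∈ N.transitions \ T' then N.pre t p else 0
  post := fun t p => if t ∈ N.transitions \ T' then N.post t p else 0
  pre_eq_zero := by intro t ht p; simp [ht]
  post_eq_zero := by intro t ht p; simp [ht]

/-- The composition `N1 | N2` of two nets (intended for disjoint place sets);
shared transitions synchronize. -/
def comp (N1 N2 : PTNet P Tr) : PTNet P Tr where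
  places := N1.places ∪ N2.places
  transitions := N1.transitions ∪ N2.transitions
  pre := fun t p => if p ∈ N1.places then N1.pre t p else N2.pre t p
  post := fun t p => if p ∈ N1.places then N1.post t p else N2.post t p
  pre_eq_zero := by
    intro t ht p
    simp only [Finset.mem_union, not_or] at ht
    by_cases hp : p ∈ N1.places <;>
      simp [hp, N1.pre_eq_zero t ht.1, N2.pre_eq_zero t ht.2]
  post_eq_zero := by
    intro t ht p
    simp only [Finset.mem_union, not_or] at ht
    by_cases hp : p ∈ N1.places <;>
      simp [hp, N1.post_eq_zero t ht.1, N2.post_eq_zero t ht.2]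

/-- The union of two initial markings (agrees with `M1` on the places of `N1`,
with `M2` elsewhere). -/
def combine (N1 : PTNet P Tr) (M1 M2 : P → ℕ) : P → ℕ :=
  fun p => if p ∈ N1.places then M1 p else M2 p

/-- The reachability graph of a marked net, as an LTS on markings. -/
def toLTS (N : PTNet P Tr) (M0 : P → ℕ) : LTS (P → ℕ) Tr where
  init := M0
  tr := fun M t M' => N.Fires M t M'

/-- The language of the net system `(N, M0)` whose observable transitions are
those in `L` (labelled by themselves): projections of firing sequences onto `L*`. -/
def lang (N : PTNet P Tr) (M0 : P → ℕ) (L : Finset Tr) : Set (List Tr) :=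
  { w | ∃ s M, N.FiresSeq M0 s M ∧ s.filter (· ∈ L) = w }

/-- The free language of the net system `(N, M0)`: all of its firing sequences. -/
def freeLang (N : PTNet P Tr) (M0 : P → ℕ) : Set (List Tr) :=
  { s | ∃ M, N.FiresSeq M0 s M }

/-- The net with given places and transitions and empty flow. -/
def ofSets (Pl : Finset P) (Ts : Finset Tr) : PTNet P Tr where
  places := Pl
  transitions := Ts
  pre := fun _ _ => 0
  post := fun _ _ => 0
  pre_eq_zero := fun _ _ _ => rfl
  post_eq_zero := fun _ _ _ => rfl

end PTNet

/-! ## Non-interference properties -/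

section Security

variable {P Tr : Type _} [DecidableEq P] [DecidableEq Tr]

/-- Non-Deducibility on Compositions: for every high-level net system `N'`
(with any initial marking `M0'`) whose places are disjoint from those of `N` and
whose transitions avoid `L`, the systems `N \ H` and `(N | N') \ (H \ H')` are
language equivalent, the observable transitions being those in `L`. -/
def NDC (N : PTNet P Tr) (M0 : P → ℕ) (L H : Finset Tr) : Prop :=
  ∀ (N' : PTNet P Tr) (M0' : P → ℕ),
    Disjoint N.places N'.places → Disjoint N'.transitions L →
    (N.restrict H).lang M0 L =
      ((N.comp N').restrict (H \ N'.transitions)).lang (N.combine M0 M0') L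

/-- Bisimulation-based Non-Deducibility on Compositions: as `NDC`, but with
weak bisimilarity in place of language equivalence. -/
def BNDC (N : PTNet P Tr) (M0 : P → ℕ) (L H : Finset Tr) : Prop :=
  ∀ (N' : PTNet P Tr) (M0' : P → ℕ),
    Disjoint N.places N'.places → Disjoint N'.transitions L →
    WeaklyBisimilar (L : Set Tr) ((N.restrict H).toLTS M0)
      (((N.comp N').restrict (H \ N'.transitions)).toLTS (N.combine M0 M0'))

/-- Strong BNDC: whenever a reachable marking `M1` enables a high transition `h`
with `M1[h⟩M2`, the systems `(N \ H, M1)` and `(N \ H, M2)` are weakly bisimilar. -/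
def SBNDC (N : PTNet P Tr) (M0 : P → ℕ) (L H : Finset Tr) : Prop :=
  ∀ M1 h M2, N.Reachable M0 M1 → h ∈ H → N.Fires M1 h M2 →
    WeaklyBisimilar (L : Set Tr) ((N.restrict H).toLTS M1) ((N.restrict H).toLTS M2)

/-- The least relation generated from `M0 R M0` by:
(i) if `M1 R M2` and `M2[h⟩M2'` with `h ∈ H` then `M1 R M2'`;
(ii) if `M1 R M2`, `M1[l⟩M1'` (in `N \ H`) and `M2[l⟩M2'` with `l ∈ L`
then `M1' R M2'`. -/
inductive RRel (N : PTNet P Tr) (M0 : P → ℕ) (L H : Finset Tr) : (P → ℕ) → (P → ℕ) → Prop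
  | base : RRel N M0 L H M0 M0
  | high {M1 M2 M2' : P → ℕ} {h : Tr} : h ∈ H → RRel N M0 L H M1 M2 →
      N.Fires M2 h M2' → RRel N M0 L H M1 M2'
  | low {M1 M2 M1' M2' : P → ℕ} {l : Tr} : l ∈ L → RRel N M0 L H M1 M2 →
      (N.restrict H).Fires M1 l M1' → N.Fires M2 l M2' → RRel N M0 L H M1' M2'

/-- The property `P(h,l)`: for all `w ∈ (L ∪ H)*` and `s ∈ L*`, if `M0[w⟩M1`,
`M1[h⟩M2`, `M1[s⟩M3` and `M2[s⟩M4`, then `M3[l⟩` iff `M4[l⟩`. -/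
def PropP (N : PTNet P Tr) (M0 : P → ℕ) (L H : Finset Tr) (h l : Tr) : Prop :=
  ∀ (w s : List Tr) (M1 M2 M3 M4 : P → ℕ),
    (∀ t ∈ w, t ∈ L ∪ H) → (∀ t ∈ s, t ∈ L) →
    N.FiresSeq M0 w M1 → N.Fires M1 h M2 →
    N.FiresSeq M1 s M3 → N.FiresSeq M2 s M4 →
    (N.Enabled M3 l ↔ N.Enabled M4 l)

/-- Intransitive Non-Interference for a three-level net system:
`(N \ D, M)` has NDC (w.r.t. low `L`, high `H`) for `M = M0` and for every
marking `M` with `M0[υd⟩M` in `N`, `d ∈ D`. -/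
def INI (N : PTNet P Tr) (M0 : P → ℕ) (L D H : Finset Tr) : Prop :=
  NDC (N.restrict D) M0 L H ∧
  ∀ (υ : List Tr) (d : Tr) (M : P → ℕ), d ∈ D → N.FiresSeq M0 (υ ++ [d]) M →
    NDC (N.restrict D) M L H

/-- Bisimulation-based Intransitive Non-Interference: as `INI` with `BNDC`. -/
def BINI (N : PTNet P Tr) (M0 : P → ℕ) (L D H : Finset Tr) : Prop :=
  BNDC (N.restrict D) M0 L H ∧
  ∀ (υ : List Tr) (d : Tr) (M : P → ℕ), d ∈ D → N.FiresSeq M0 (υ ++ [d]) M →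
    BNDC (N.restrict D) M L H

/-- The property `Q(h,l)`: for all `χ ∈ T*` and `s ∈ L*`, if `M0[χ⟩M1`,
`M1[h⟩M2`, `M1[s⟩M3` and `M2[s⟩M4`, then `M3[l⟩` iff `M4[l⟩`. -/
def PropQ (N : PTNet P Tr) (M0 : P → ℕ) (L : Finset Tr) (h l : Tr) : Prop :=
  ∀ (χ s : List Tr) (M1 M2 M3 M4 : P → ℕ),
    (∀ t ∈ χ, t ∈ N.transitions) → (∀ t ∈ s, t ∈ L) →
    N.FiresSeq M0 χ M1 → N.Fires M1 h M2 →
    N.FiresSeq M1 s M3 → N.FiresSeq M2 s M4 →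
    (N.Enabled M3 l ↔ N.Enabled M4 l)

end Security

/-!
When every transition of `N \ H` is observable, weak bisimulations of its reachability graphs are
strong bisimulations; since firing is deterministic, two markings of `N \ H` are then bisimilar
exactly when they enable the same transitions after every common firing sequence (the relation
"reached by the same sequence" is the bisimulation). With `T = L ∪ H` disjointly, the firing
sequences of `N \ H` are the `L`-sequences of `N`, and for `M1[h⟩M2` this condition is `P(h,l)`
for all `l ∈ L`.
-/

namespace LTS

variable {Q A : Type _}

def TauFree (S : LTS Q A) (Obs : Set A) : Prop :=
  ∀ q a q', S.tr q a q' → a ∈ Obs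

theorem TauFree.tauStar_iff {S : LTS Q A} {Obs : Set A} (hS : S.TauFree Obs) {q q' : Q} :
    S.TauStar Obs q q' ↔ q' = q :=
  Relation.reflTransGen_iff_eq fun _ ⟨_, hτ, htr⟩ => hτ (hS _ _ _ htr)

end LTS

theorem isWeakSimulation_iff_of_tauFree {Q Q' A : Type _} {Obs : Set A} {S : LTS Q A}
    {S' : LTS Q' A} {R : Q → Q' → Prop} (hS : S.TauFree Obs) (hS' : S'.TauFree Obs) :
    IsWeakSimulation Obs S S' R ↔
      R S.init S'.init ∧
        ∀ q1 q1' a q2, R q1 q1' → S.tr q1 a q2 → ∃ q2', S'.tr q1' a q2' ∧ R q2 q2' := by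
  simp only [IsWeakSimulation, hS'.tauStar_iff]
  refine and_congr_right fun _ => ⟨fun hsim q1 q1' a q2 hR htr => ?_, fun hstep q1 q1' hR => ?_⟩
  · obtain ⟨_, _, q2', rfl, htr', rfl, hR'⟩ := (hsim q1 q1' hR).1 a (hS _ _ _ htr) q2 htr
    exact ⟨q2', htr', hR'⟩
  · refine ⟨fun a _ q2 htr => ?_, fun τ hτ q2 htr => absurd (hS _ _ _ htr) hτ⟩
    obtain ⟨q2', htr', hR'⟩ := hstep q1 q1' a q2 hR htr
    exact ⟨q1', q2', q2', rfl, htr', rfl, hR'⟩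

namespace PTNet

variable {P Tr : Type _}

section Firing

variable [DecidableEq P]

theorem fires_right_unique {N : PTNet P Tr} {M M1 M2 : P → ℕ} {t : Tr}
    (h1 : N.Fires M t M1) (h2 : N.Fires M t M2) : M1 = M2 :=
  h1.2.trans h2.2.symm

theorem firesSeq_right_unique {N : PTNet P Tr} {s : List Tr} {M M1 M2 : P → ℕ}
    (h1 : N.FiresSeq M s M1) (h2 : N.FiresSeq M s M2) : M1 = M2 := by
  induction s generalizing M with
  | nil => exact h1.trans h2.symm
  | cons t s ih =>
    obtain ⟨_, hf1, hs1⟩ := h1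
    obtain ⟨_, hf2, hs2⟩ := h2
    cases fires_right_unique hf1 hf2
    exact ih hs1 hs2

theorem firesSeq_concat {N : PTNet P Tr} {s : List Tr} {t : Tr} {M M' M'' : P → ℕ}
    (hs : N.FiresSeq M s M') (ht : N.Fires M' t M'') : N.FiresSeq M (s.concat t) M'' := by
  induction s generalizing M with
  | nil => cases hs; exact ⟨M'', ht, rfl⟩
  | cons a s ih =>
    obtain ⟨Ma, hfa, hsa⟩ := hs
    exact ⟨Ma, hfa, ih hsa⟩

theorem mem_transitions_of_firesSeq {N : PTNet P Tr} {s : List Tr} {M M' : P → ℕ}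
    (hs : N.FiresSeq M s M') : ∀ t ∈ s, t ∈ N.transitions := by
  induction s generalizing M with
  | nil => simp
  | cons a s ih =>
    obtain ⟨_, hfa, hsa⟩ := hs
    simpa using ⟨hfa.1.1, ih hsa⟩

theorem toLTS_tauFree {N : PTNet P Tr} {Obs : Set Tr} (hObs : ↑N.transitions ⊆ Obs)
    (M : P → ℕ) : (N.toLTS M).TauFree Obs :=
  fun _ _ _ htr => hObs htr.1.1

theorem exists_firesSeq_of_forall_fires {N : PTNet P Tr} {R : (P → ℕ) → (P → ℕ) → Prop}
    (hstep : ∀ A B t A', R A B → N.Fires A t A' → ∃ B', N.Fires B t B' ∧ R A' B')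
    {s : List Tr} {A B A' : P → ℕ} (hR : R A B) (hs : N.FiresSeq A s A') :
    ∃ B', N.FiresSeq B s B' ∧ R A' B' := by
  induction s generalizing A B with
  | nil => cases hs; exact ⟨B, rfl, hR⟩
  | cons t s ih =>
    obtain ⟨At, hft, hst⟩ := hs
    obtain ⟨Bt, hft', hRt⟩ := hstep A B t At hR hft
    obtain ⟨B', hs', hR'⟩ := ih hRt hst
    exact ⟨B', ⟨Bt, hft', hs'⟩, hR'⟩

theorem weaklyBisimilar_toLTS_iff {N : PTNet P Tr} {Obs : Set Tr} (hObs : ↑N.transitions ⊆ Obs)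
    (M M' : P → ℕ) :
    WeaklyBisimilar Obs (N.toLTS M) (N.toLTS M') ↔
      ∀ s M3 M4, N.FiresSeq M s M3 → N.FiresSeq M' s M4 →
        ∀ t, N.Enabled M3 t ↔ N.Enabled M4 t := by
  simp only [WeaklyBisimilar, IsWeakBisimulation,
    isWeakSimulation_iff_of_tauFree (toLTS_tauFree hObs _) (toLTS_tauFree hObs _)]
  constructor
  · rintro ⟨R, ⟨hR0, hfwd⟩, -, hbwd⟩ s M3 M4 hs3 hs4 t
    obtain ⟨M4', hs4', hR34⟩ := exists_firesSeq_of_forall_fires hfwd hR0 hs3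
    cases firesSeq_right_unique hs4 hs4'
    exact ⟨fun hen => (hfwd _ _ t _ hR34 ⟨hen, rfl⟩).elim fun _ h => h.1.1,
      fun hen => (hbwd _ _ t _ hR34 ⟨hen, rfl⟩).elim fun _ h => h.1.1⟩
  · intro hen
    refine ⟨fun A B => ∃ s, N.FiresSeq M s A ∧ N.FiresSeq M' s B,
      ⟨⟨[], rfl, rfl⟩, ?_⟩, ⟨[], rfl, rfl⟩, ?_⟩
    · rintro A B t A' ⟨s, hsA, hsB⟩ hf
      have hfB : N.Fires B t (N.fire B t) := ⟨(hen s A B hsA hsB t).1 hf.1, rfl⟩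
      exact ⟨_, hfB, s.concat t, firesSeq_concat hsA hf, firesSeq_concat hsB hfB⟩
    · rintro B A t B' ⟨s, hsA, hsB⟩ hf
      have hfA : N.Fires A t (N.fire A t) := ⟨(hen s A B hsA hsB t).2 hf.1, rfl⟩
      exact ⟨_, hfA, s.concat t, firesSeq_concat hsA hfA, firesSeq_concat hsB hf⟩

end Firing

theorem enabled_restrict_iff [DecidableEq Tr] {N : PTNet P Tr} {H : Finset Tr} {M : P → ℕ}
    {t : Tr} : (N.restrict H).Enabled M t ↔ N.Enabled M t ∧ t ∉ H := by
  by_cases ht : t ∈ N.transitions \ H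
  · simp_all [Enabled, restrict]
  · have hdis : ¬(N.Enabled M t ∧ t ∉ H) := fun h => ht (Finset.mem_sdiff.2 ⟨h.1.1, h.2⟩)
    exact iff_of_false (fun h => ht h.1) hdis

variable [DecidableEq P] [DecidableEq Tr]

theorem fires_restrict_iff {N : PTNet P Tr} {H : Finset Tr} {M M' : P → ℕ} {t : Tr} :
    (N.restrict H).Fires M t M' ↔ N.Fires M t M' ∧ t ∉ H := by
  rw [Fires, Fires, enabled_restrict_iff]
  by_cases ht : t ∈ N.transitions \ H
  · have hfire : (N.restrict H).fire M t = N.fire M t := by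
      funext p
      simp [fire, restrict, Finset.mem_sdiff.1 ht]
    rw [hfire]
    tauto
  · have hdis : ¬(N.Enabled M t ∧ t ∉ H) := fun h => ht (Finset.mem_sdiff.2 ⟨h.1.1, h.2⟩)
    tauto

theorem firesSeq_restrict_iff {N : PTNet P Tr} {H : Finset Tr} {s : List Tr} {M M' : P → ℕ} :
    (N.restrict H).FiresSeq M s M' ↔ N.FiresSeq M s M' ∧ ∀ t ∈ s, t ∉ H := by
  induction s generalizing M with
  | nil => simp [FiresSeq]
  | cons t s ih =>
    simp only [FiresSeq, fires_restrict_iff, ih, List.mem_cons, forall_eq_or_imp]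
    constructor
    · rintro ⟨M'', ⟨hf, ht⟩, hs, hsH⟩
      exact ⟨⟨M'', hf, hs⟩, ht, hsH⟩
    · rintro ⟨⟨M'', hf, hs⟩, ht, hsH⟩
      exact ⟨M'', ⟨hf, ht⟩, hs, hsH⟩

theorem weaklyBisimilar_restrict_iff {N : PTNet P Tr} {L H : Finset Tr}
    (hT : N.transitions = L ∪ H) (hLH : Disjoint L H) (M M' : P → ℕ) :
    WeaklyBisimilar (L : Set Tr) ((N.restrict H).toLTS M) ((N.restrict H).toLTS M') ↔
      ∀ l ∈ L, ∀ s M3 M4, (∀ t ∈ s, t ∈ L) →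
        N.FiresSeq M s M3 → N.FiresSeq M' s M4 → (N.Enabled M3 l ↔ N.Enabled M4 l) := by
  have mem_L {t : Tr} (ht : t ∈ N.transitions) (htH : t ∉ H) : t ∈ L :=
    (Finset.mem_union.1 (hT ▸ ht)).resolve_right htH
  have hsub : ↑(N.restrict H).transitions ⊆ (L : Set Tr) := fun t ht =>
    mem_L (Finset.mem_sdiff.1 ht).1 (Finset.mem_sdiff.1 ht).2
  rw [weaklyBisimilar_toLTS_iff hsub]
  simp only [firesSeq_restrict_iff, enabled_restrict_iff]
  constructor
  · intro hK l hl s M3 M4 hsL hs3 hs4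
    have hsH : ∀ t ∈ s, t ∉ H := fun t ht => Finset.disjoint_left.1 hLH (hsL t ht)
    simpa [Finset.disjoint_left.1 hLH hl] using hK s M3 M4 ⟨hs3, hsH⟩ ⟨hs4, hsH⟩ l
  · rintro hN s M3 M4 ⟨hs3, hsH⟩ ⟨hs4, -⟩ t
    by_cases htL : t ∈ L
    · have hsL : ∀ u ∈ s, u ∈ L := fun u hu =>
        mem_L (mem_transitions_of_firesSeq hs3 u hu) (hsH u hu)
      rw [hN t htL s M3 M4 hsL hs3 hs4]
    · have hoff : ∀ M, ¬(N.Enabled M t ∧ t ∉ H) := fun _ h => htL (mem_L h.1.1 h.2)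
      exact iff_of_false (hoff M3) (hoff M4)

end PTNet

/-- a two-level net system has SBNDC iff `P(h,l)` holds for every
`h ∈ H` and every `l ∈ L`. -/
theorem sbndc_iff_propP
    {P Tr : Type _} [DecidableEq P] [DecidableEq Tr]
    (N : PTNet P Tr) (M0 : P → ℕ) (L H : Finset Tr)
    (hT : N.transitions = L ∪ H) (hLH : Disjoint L H) :
    SBNDC N M0 L H ↔ ∀ h ∈ H, ∀ l ∈ L, PropP N M0 L H h l := by
  constructor
  · intro hS h hh l hl w s M1 M2 M3 M4 _ hsL hw hM2 hs3 hs4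
    exact (PTNet.weaklyBisimilar_restrict_iff hT hLH M1 M2).1 (hS M1 h M2 ⟨w, hw⟩ hh hM2)
      l hl s M3 M4 hsL hs3 hs4
  · rintro hP M1 h M2 ⟨w, hw⟩ hh hM2
    have hwT : ∀ t ∈ w, t ∈ L ∪ H := hT ▸ PTNet.mem_transitions_of_firesSeq hw
    exact (PTNet.weaklyBisimilar_restrict_iff hT hLH M1 M2).2 fun l hl s M3 M4 hsL hs3 hs4 =>
      hP h hh l hl w s M1 M2 M3 M4 hwT hsL hw hM2 hs3 hs4
end

section
/- Let N be a two-level PT-net system with place set P, transition set T = L ∪ H, flow F and initial marking M0, and fix h ∈ H and l ∈ L. Construct the PT-net system N' as follows: N₁ is a copy of N on a fresh place set P1 (with the same transition names) augmented with a new transition l1' that acts on P1 exactly as l does; N₂ is a copy of N on a fresh place set P2 disjoint from P1 augmented with a new transition l2' acting on P2 exactly as l does and a new transition h' acting on P2 exactly as h does; N' is the composition N₁|N₂ (so the transitions of T are synchronized between the two copies) augmented with two fresh places x and y, extending the flow by (a) F'(x,t) = F'(t,x) = 1 for every t ∈ H, and (b) F'(x,h') = 1, F'(h',y) = 1, F'(y,l1')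 = 1, F'(y,l2') = 1; initially x carries one token, y carries zero tokens, and each copy of the places carries M0. Then P(h,l) holds in N if and only if no marking M' reachable in N' satisfies (M'[l1'⟩ and not M'[l2'⟩) or (not M'[l1'⟩ and M'[l2'⟩). -/
/-! The construction of the net `N'` used to decide `P(h,l)`: two copies of `N`
(on the fresh place sets `P1` = left copy and `P2` = right copy) synchronized on
the transitions of `N`, with extra local transitions `l1'` (acting on `P1` as
`l`), `l2'` (acting on `P2` as `l`) and `h'` (acting on `P2` as `h`), and two
extra places `x` (with a side-condition loop on all transitions of `H`,
consumed by `h'`) and `y` (produced by `h'`, consumed by `l1'` and `l2'`). -/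

namespace Gadget13

variable {P Tr : Type _} [DecidableEq P] [DecidableEq Tr]

/-- `l1' = Sum.inr 0`, `l2' = Sum.inr 1`, `h' = Sum.inr 2`;
places: `Sum.inl p ∈ P1`, `Sum.inr (Sum.inl p) ∈ P2`,
`x = Sum.inr (Sum.inr true)`, `y = Sum.inr (Sum.inr false)`. -/
def net (N : PTNet P Tr) (H : Finset Tr) (h l : Tr) :
    PTNet (P ⊕ P ⊕ Bool) (Tr ⊕ Fin 3) where
  places :=
    N.places.image Sum.inl ∪ N.places.image (fun p => Sum.inr (Sum.inl p)) ∪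
      {Sum.inr (Sum.inr true), Sum.inr (Sum.inr false)}
  transitions := N.transitions.image Sum.inl ∪ {Sum.inr 0, Sum.inr 1, Sum.inr 2}
  pre :=
    Sum.elim
      (fun u =>
        if u ∈ N.transitions then
          Sum.elim (fun p => N.pre u p)
            (Sum.elim (fun p => N.pre u p)
              (fun b => if b then (if u ∈ H then 1 else 0) else 0))
        else fun _ => 0)
      (fun i =>
        if i = 0 then
          Sum.elim (fun p => N.pre l p)
            (Sum.elim (fun _ => 0) (fun b => if b then 0 else 1))
        else if i = 1 then
          Sum.elim (fun _ => 0)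
            (Sum.elim (fun p => N.pre l p) (fun b => if b then 0 else 1))
        else
          Sum.elim (fun _ => 0)
            (Sum.elim (fun p => N.pre h p) (fun b => if b then 1 else 0)))
  post :=
    Sum.elim
      (fun u =>
        if u ∈ N.transitions then
          Sum.elim (fun p => N.post u p)
            (Sum.elim (fun p => N.post u p)
              (fun b => if b then (if u ∈ H then 1 else 0) else 0))
        else fun _ => 0)
      (fun i =>
        if i = 0 then
          Sum.elim (fun p => N.post l p)
            (Sum.elim (fun _ => 0) (fun _ => 0))
        else if i = 1 then
          Sum.elim (fun _ => 0)
            (Sum.elim (fun p => N.post l p) (fun _ => 0))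
        else
          Sum.elim (fun _ => 0)
            (Sum.elim (fun p => N.post h p) (fun b => if b then 0 else 1)))
  pre_eq_zero := by
    intro t ht q
    rcases t with u | i
    · have hu : u ∉ N.transitions := fun hc =>
        ht (Finset.mem_union_left _ (Finset.mem_image_of_mem _ hc))
      simp [hu]
    · exfalso
      apply ht
      have h3 : i = 0 ∨ i = 1 ∨ i = 2 := by omega
      rcases h3 with rfl | rfl | rfl <;> simp
  post_eq_zero := by
    intro t ht q
    rcases t with u | i
    · have hu : u ∉ N.transitions := fun hc =>
        ht (Finset.mem_union_left _ (Finset.mem_image_of_mem _ hc))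
      simp [hu]
    · exfalso
      apply ht
      have h3 : i = 0 ∨ i = 1 ∨ i = 2 := by omega
      rcases h3 with rfl | rfl | rfl <;> simp

/-- The initial marking of the constructed net: `M0` on each copy of the places
of `N`, one token on `x` and none on `y`. -/
def init (M0 : P → ℕ) : P ⊕ P ⊕ Bool → ℕ :=
  Sum.elim M0 (Sum.elim M0 (fun b => if b then 1 else 0))

end Gadget13

/-! The token on `x` licenses the high transitions, so until `h'` fires the two copies of `N`
move in lockstep. Firing `h'` moves that token to `y` and fires `h` on the second copy only;
from then on the copies can jointly fire only low transitions, and the first of `l1'`, `l2'`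
to fire consumes `y`. Hence the reachable markings that enable `l1'` or `l2'` are exactly the
pairs `(M3, M4)` in the hypothesis of `P(h,l)`, placed on the two copies. -/

namespace PTNet

variable {P Tr : Type _} {N : PTNet P Tr}

theorem enabled_iff_of_mem {M : P → ℕ} {t : Tr} (ht : t ∈ N.transitions) :
    N.Enabled M t ↔ ∀ p ∈ N.places, N.pre t p ≤ M p :=
  and_iff_right ht

variable [DecidableEq P]

theorem firesSeq_append {M M'' : P → ℕ} {s s' : List Tr} :
    N.FiresSeq M (s ++ s') M'' ↔ ∃ M', N.FiresSeq M s M' ∧ N.FiresSeq M' s' M'' := by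
  induction s generalizing M with
  | nil => simp [FiresSeq]
  | cons t s ih => simp only [List.cons_append, FiresSeq, ih]; grind

theorem FiresSeq.concat {M M' M'' : P → ℕ} {s : List Tr} {t : Tr}
    (hs : N.FiresSeq M s M') (ht : N.Fires M' t M'') : N.FiresSeq M (s ++ [t]) M'' :=
  firesSeq_append.2 ⟨M', hs, M'', ht, rfl⟩

theorem FiresSeq.mem_transitions {M M' : P → ℕ} {s : List Tr} (hs : N.FiresSeq M s M') :
    ∀ t ∈ s, t ∈ N.transitions := by
  induction s generalizing M with
  | nil => simp
  | cons u s ih =>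
    obtain ⟨M'', hu, hs⟩ := hs
    simpa [hu.1.1] using ih hs

theorem Reachable.tail {M M' M'' : P → ℕ} {t : Tr} (hM : N.Reachable M M')
    (ht : N.Fires M' t M'') : N.Reachable M M'' :=
  let ⟨s, hs⟩ := hM
  ⟨s ++ [t], hs.concat ht⟩

end PTNet

namespace Gadget13

variable {P Tr : Type _}

def marking (Ma Mb : P → ℕ) (x y : ℕ) : P ⊕ P ⊕ Bool → ℕ :=
  Sum.elim Ma (Sum.elim Mb fun b => if b then x else y)

variable [DecidableEq P] [DecidableEq Tr]
  {N : PTNet P Tr} {H : Finset Tr} {h l : Tr} {Ma Mb : P → ℕ} {x y : ℕ}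

theorem enabled_marking_inl {u : Tr} :
    (net N H h l).Enabled (marking Ma Mb x y) (Sum.inl u) ↔
      (u ∈ H → 1 ≤ x) ∧ N.Enabled Ma u ∧ N.Enabled Mb u := by
  by_cases hu : u ∈ N.transitions
  · by_cases huH : u ∈ H <;> simp [PTNet.Enabled, net, marking, hu, huH]
  · simp [PTNet.Enabled, net, hu]

theorem enabled_marking_l1' :
    (net N H h l).Enabled (marking Ma Mb x y) (Sum.inr 0) ↔
      1 ≤ y ∧ ∀ p ∈ N.places, N.pre l p ≤ Ma p := by
  simp [PTNet.Enabled, net, marking]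

theorem enabled_marking_l2' :
    (net N H h l).Enabled (marking Ma Mb x y) (Sum.inr 1) ↔
      1 ≤ y ∧ ∀ p ∈ N.places, N.pre l p ≤ Mb p := by
  simp [PTNet.Enabled, net, marking]

theorem enabled_marking_h' :
    (net N H h l).Enabled (marking Ma Mb x y) (Sum.inr 2) ↔
      1 ≤ x ∧ ∀ p ∈ N.places, N.pre h p ≤ Mb p := by
  simp [PTNet.Enabled, net, marking]

theorem fire_marking_inl {u : Tr} (hu : u ∈ N.transitions) :
    (net N H h l).fire (marking Ma Mb x y) (Sum.inl u) =
      marking (N.fire Ma u) (N.fire Mb u) x y := by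
  funext q
  rcases q with p | p | _ | _ <;> simp [PTNet.fire, net, marking, hu]

theorem fire_marking_l1' :
    (net N H h l).fire (marking Ma Mb x y) (Sum.inr 0) =
      marking (N.fire Ma l) Mb x (y - 1) := by
  funext q
  rcases q with p | p | _ | _ <;> simp [PTNet.fire, net, marking]

theorem fire_marking_l2' :
    (net N H h l).fire (marking Ma Mb x y) (Sum.inr 1) =
      marking Ma (N.fire Mb l) x (y - 1) := by
  funext q
  rcases q with p | p | _ | _ <;> simp [PTNet.fire, net, marking]

theorem fire_marking_h' :
    (net N H h l).fire (marking Ma Mb x y) (Sum.inr 2) =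
      marking Ma (N.fire Mb h) (x - 1) (y + 1) := by
  funext q
  rcases q with p | p | _ | _ <;> simp [PTNet.fire, net, marking]

theorem firesSeq_marking_map_inl {w : List Tr} {Ma' Mb' : P → ℕ}
    (hx : ∀ u ∈ w, u ∈ H → 1 ≤ x) (ha : N.FiresSeq Ma w Ma') (hb : N.FiresSeq Mb w Mb') :
    (net N H h l).FiresSeq (marking Ma Mb x y) (w.map Sum.inl) (marking Ma' Mb' x y) := by
  induction w generalizing Ma Mb with
  | nil =>
    rw [show Ma' = Ma from ha, show Mb' = Mb from hb]
    rfl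
  | cons u w ih =>
    obtain ⟨_, ⟨hua, rfl⟩, ha⟩ := ha
    obtain ⟨_, ⟨hub, rfl⟩, hb⟩ := hb
    refine ⟨_, ⟨?_, (fire_marking_inl hua.1).symm⟩, ih (fun v hv => hx v (by simp [hv])) ha hb⟩
    exact enabled_marking_inl.2 ⟨hx u (by simp), hua, hub⟩

end Gadget13

section

variable {P Tr : Type _} [DecidableEq P] [DecidableEq Tr]

def SplitByHigh (N : PTNet P Tr) (M0 : P → ℕ) (L : Finset Tr) (h : Tr) (M3 M4 : P → ℕ) :
    Prop :=
  ∃ M1 M2 s, N.Reachable M0 M1 ∧ N.Fires M1 h M2 ∧ (∀ t ∈ s, t ∈ L) ∧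
    N.FiresSeq M1 s M3 ∧ N.FiresSeq M2 s M4

theorem propP_iff_forall_splitByHigh {N : PTNet P Tr} {M0 : P → ℕ} {L H : Finset Tr}
    {h l : Tr} (hT : N.transitions = L ∪ H) :
    PropP N M0 L H h l ↔
      ∀ M3 M4, SplitByHigh N M0 L h M3 M4 → (N.Enabled M3 l ↔ N.Enabled M4 l) := by
  constructor
  · rintro hP M3 M4 ⟨M1, M2, s, ⟨w, hw⟩, hM2, hs, hs3, hs4⟩
    exact hP w s M1 M2 M3 M4 (hT ▸ hw.mem_transitions) hs hw hM2 hs3 hs4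
  · intro hP w s M1 M2 M3 M4 _ hs hw hM2 hs3 hs4
    exact hP M3 M4 ⟨M1, M2, s, ⟨w, hw⟩, hM2, hs, hs3, hs4⟩

end

namespace Gadget13

variable {P Tr : Type _} [DecidableEq P] [DecidableEq Tr]
  {N : PTNet P Tr} {M0 : P → ℕ} {L H : Finset Tr} {h l : Tr}

/-- The invariant of the reachable markings `marking Ma Mb x y` of the gadget, indexed by the
contents `x`, `y` of the two control places. -/
inductive Phase (N : PTNet P Tr) (M0 : P → ℕ) (L : Finset Tr) (h : Tr) :
    (P → ℕ) → (P → ℕ) → ℕ → ℕ → Prop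
  | beforeHigh {M : P → ℕ} : N.Reachable M0 M → Phase N M0 L h M M 1 0
  | afterHigh {M3 M4 : P → ℕ} : SplitByHigh N M0 L h M3 M4 → Phase N M0 L h M3 M4 0 1
  | spent (Ma Mb : P → ℕ) : Phase N M0 L h Ma Mb 0 0

theorem Phase.fires (hT : N.transitions = L ∪ H) (hh : h ∈ H) {Ma Mb : P → ℕ} {x y : ℕ}
    (hph : Phase N M0 L h Ma Mb x y) {t : Tr ⊕ Fin 3} {M' : P ⊕ P ⊕ Bool → ℕ}
    (ht : (net N H h l).Fires (marking Ma Mb x y) t M') :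
    ∃ Ma' Mb' x' y', M' = marking Ma' Mb' x' y' ∧ Phase N M0 L h Ma' Mb' x' y' := by
  obtain ⟨hen, rfl⟩ := ht
  rcases t with u | i
  · obtain ⟨hx, hua, hub⟩ := enabled_marking_inl.1 hen
    refine ⟨_, _, _, _, fire_marking_inl hua.1, ?_⟩
    cases hph with
    | beforeHigh hM => exact .beforeHigh (hM.tail ⟨hua, rfl⟩)
    | afterHigh hsplit =>
      obtain ⟨M1, M2, s, hM1, hM2, hs, hs3, hs4⟩ := hsplit
      have huL : u ∈ L := by
        have hu : u ∈ L ∪ H := hT ▸ hua.1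
        rw [Finset.mem_union] at hu
        exact hu.resolve_right fun huH => absurd (hx huH) (by decide)
      refine .afterHigh ⟨M1, M2, s ++ [u], hM1, hM2, ?_, hs3.concat ⟨hua, rfl⟩,
        hs4.concat ⟨hub, rfl⟩⟩
      simp only [List.mem_append, List.mem_singleton]
      rintro t (ht | rfl)
      exacts [hs t ht, huL]
    | spent => exact .spent _ _
  obtain rfl | rfl | rfl : i = 0 ∨ i = 1 ∨ i = 2 := by omega
  · rw [enabled_marking_l1'] at hen
    cases hph with
    | afterHigh => exact ⟨_, _, _, _, fire_marking_l1', .spent _ _⟩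
    | _ => simp at hen
  · rw [enabled_marking_l2'] at hen
    cases hph with
    | afterHigh => exact ⟨_, _, _, _, fire_marking_l2', .spent _ _⟩
    | _ => simp at hen
  · rw [enabled_marking_h'] at hen
    cases hph with
    | beforeHigh hM =>
      have hhT : h ∈ N.transitions := hT ▸ Finset.mem_union_right L hh
      exact ⟨_, _, _, _, fire_marking_h',
        .afterHigh ⟨Ma, _, [], hM, ⟨⟨hhT, hen.2⟩, rfl⟩, by simp, rfl, rfl⟩⟩
    | _ => simp at hen

theorem Phase.firesSeq (hT : N.transitions = L ∪ H) (hh : h ∈ H) {Ma Mb : P → ℕ} {x y : ℕ}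
    (hph : Phase N M0 L h Ma Mb x y) {σ : List (Tr ⊕ Fin 3)} {M' : P ⊕ P ⊕ Bool → ℕ}
    (hσ : (net N H h l).FiresSeq (marking Ma Mb x y) σ M') :
    ∃ Ma' Mb' x' y', M' = marking Ma' Mb' x' y' ∧ Phase N M0 L h Ma' Mb' x' y' := by
  induction σ generalizing Ma Mb x y with
  | nil => exact ⟨Ma, Mb, x, y, hσ, hph⟩
  | cons t σ ih =>
    obtain ⟨M'', ht, hσ⟩ := hσ
    obtain ⟨Ma'', Mb'', x'', y'', rfl, hph''⟩ := hph.fires hT hh ht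
    exact ih hph'' hσ

theorem exists_phase_of_reachable (hT : N.transitions = L ∪ H) (hh : h ∈ H)
    {M' : P ⊕ P ⊕ Bool → ℕ} (hM' : (net N H h l).Reachable (init M0) M') :
    ∃ Ma Mb x y, M' = marking Ma Mb x y ∧ Phase N M0 L h Ma Mb x y :=
  let ⟨_, hσ⟩ := hM'
  (Phase.beforeHigh ⟨[], rfl⟩).firesSeq hT hh hσ

theorem reachable_marking_of_splitByHigh (hLH : Disjoint L H) {M3 M4 : P → ℕ}
    (hsplit : SplitByHigh N M0 L h M3 M4) :
    (net N H h l).Reachable (init M0) (marking M3 M4 0 1) := by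
  obtain ⟨M1, _, s, ⟨w, hw⟩, ⟨hhen, rfl⟩, hs, hs3, hs4⟩ := hsplit
  have hsH : ∀ u ∈ s, u ∈ H → 1 ≤ 0 := fun u hu huH =>
    absurd huH (Finset.disjoint_left.1 hLH (hs u hu))
  refine ⟨w.map Sum.inl ++ Sum.inr 2 :: s.map Sum.inl, PTNet.firesSeq_append.2
    ⟨marking M1 M1 1 0, firesSeq_marking_map_inl (fun _ _ _ => le_rfl) hw hw, _, ?_,
      firesSeq_marking_map_inl hsH hs3 hs4⟩⟩
  exact ⟨enabled_marking_h'.2 ⟨le_rfl, hhen.2⟩, (fire_marking_h' (x := 1) (y := 0)).symm⟩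

end Gadget13

open Gadget13 in
/-- `P(h,l)` holds in `N` iff no marking `M'` reachable in the
constructed net `N'` enables exactly one of `l1'` and `l2'`. -/
theorem propP_iff_gadget
    {P Tr : Type _} [DecidableEq P] [DecidableEq Tr]
    (N : PTNet P Tr) (M0 : P → ℕ) (L H : Finset Tr)
    (hT : N.transitions = L ∪ H) (hLH : Disjoint L H)
    (h l : Tr) (hh : h ∈ H) (hl : l ∈ L) :
    PropP N M0 L H h l ↔
      ∀ M' : P ⊕ P ⊕ Bool → ℕ,
        (Gadget13.net N H h l).Reachable (Gadget13.init M0) M' →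
        ¬ (((Gadget13.net N H h l).Enabled M' (Sum.inr 0) ∧
              ¬ (Gadget13.net N H h l).Enabled M' (Sum.inr 1)) ∨
           (¬ (Gadget13.net N H h l).Enabled M' (Sum.inr 0) ∧
              (Gadget13.net N H h l).Enabled M' (Sum.inr 1))) := by
  have hlT : l ∈ N.transitions := hT ▸ Finset.mem_union_left H hl
  rw [propP_iff_forall_splitByHigh hT]
  constructor
  · intro hP M' hM'
    obtain ⟨Ma, Mb, x, y, rfl, hph⟩ := exists_phase_of_reachable hT hh hM'
    simp only [enabled_marking_l1', enabled_marking_l2', ← PTNet.enabled_iff_of_mem hlT]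
    cases hph with
    | afterHigh hsplit => have := hP _ _ hsplit; tauto
    | _ => simp
  · intro hG M3 M4 hsplit
    have := hG _ (reachable_marking_of_splitByHigh hLH hsplit)
    simp only [enabled_marking_l1', enabled_marking_l2', ← PTNet.enabled_iff_of_mem hlT] at this
    tauto
end
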